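/- arXiv:2111.06234 — 3 statements merged into one kernel-verified Lean document; each statement's English description precedes it below -/
import Mathlib

section
/- Let L : C[a,b] → B[a,b] be a positive linear operator and g ∈ C[a,b]. Then for every x ∈ [a,b] and δ > 0: |L(g)(x) − g(x)| ≤ |g(x)|·|L(1)(x) − 1| + ω(g;δ)·(1 + |L(1)(x) − 1|) + (ω(g;δ)/δ²)·L((s − x)²)(x), where L acts in the variable s. -/
/-!
Chaining along `[x, s]` in steps of length at most `δ` gives
`|g s - g x| ≤ ⌈|s - x| / δ⌉ ω(g;δ) ≤ ω(g;δ) (1 + (s - x)² / δ²)`. A positive linear operator is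
monotone, so applied to `g - g x` it turns this into
`|L g x - g x L 1 x| ≤ ω(g;δ) (L 1 x + L((s - x)²)(x) / δ²)`, and the defect `g x (L 1 x - 1)`
accounts for the remaining terms.
-/

/-- The modulus of continuity of a continuous function on `[a,b]`. -/
noncomputable def modCont {a b : ℝ} (g : C(Set.Icc a b, ℝ)) (δ : ℝ) : ℝ :=
  sSup {d | ∃ s x : Set.Icc a b, |(s : ℝ) - (x : ℝ)| ≤ δ ∧ d = |g s - g x|}

theorem Nat.ceil_le_one_add_sq (r : ℝ) : (⌈r⌉₊ : ℝ) ≤ 1 + r ^ 2 := by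
  rcases le_or_gt r 1 with hr1 | hr1
  · have : (⌈r⌉₊ : ℝ) ≤ 1 := by exact_mod_cast Nat.ceil_le.mpr (by simpa using hr1)
    nlinarith [sq_nonneg r]
  · nlinarith [Nat.ceil_lt_add_one (by linarith : 0 ≤ r)]

section ModulusOfContinuity

variable {a b : ℝ} (g : C(Set.Icc a b, ℝ))

theorem modCont_bddAbove (δ : ℝ) :
    BddAbove {d | ∃ s x : Set.Icc a b, |(s : ℝ) - (x : ℝ)| ≤ δ ∧ d = |g s - g x|} := by
  refine ⟨2 * ‖g‖, ?_⟩
  rintro d ⟨s, x, -, rfl⟩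
  have hs := g.norm_coe_le_norm s
  have hx := g.norm_coe_le_norm x
  rw [Real.norm_eq_abs] at hs hx
  linarith [abs_sub (g s) (g x)]

theorem abs_sub_le_modCont {δ : ℝ} {s x : Set.Icc a b} (h : |(s : ℝ) - (x : ℝ)| ≤ δ) :
    |g s - g x| ≤ modCont g δ :=
  le_csSup (modCont_bddAbove g δ) ⟨s, x, h, rfl⟩

theorem modCont_nonneg {δ : ℝ} (hδ : 0 ≤ δ) (x : Set.Icc a b) : 0 ≤ modCont g δ := by
  simpa using abs_sub_le_modCont g (δ := δ) (s := x) (x := x) (by simpa using hδ)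

theorem abs_sub_le_nat_mul_modCont {δ : ℝ} (n : ℕ) {s x : Set.Icc a b}
    (h : |(s : ℝ) - (x : ℝ)| ≤ n * δ) : |g s - g x| ≤ n * modCont g δ := by
  induction n generalizing x with
  | zero =>
    have : s = x := Subtype.ext (sub_eq_zero.mp (abs_nonpos_iff.mp (by simpa using h)))
    simp [this]
  | succ n ih =>
    have hn : (0 : ℝ) < n + 1 := by positivity
    -- the first of `n + 1` equal steps from `x` to `s`
    let y : Set.Icc a b := ⟨x + (n + 1 : ℝ)⁻¹ * (s - x),
      (convex_Icc a b).add_smul_sub_mem x.2 s.2 (t := (n + 1 : ℝ)⁻¹)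
        ⟨by positivity, inv_le_one_of_one_le₀ (by simp)⟩⟩
    have hxy : |(y : ℝ) - x| ≤ δ := by
      rw [show (y : ℝ) - x = (n + 1 : ℝ)⁻¹ * (s - x) by simp [y], abs_mul,
        abs_of_pos (inv_pos.mpr hn), inv_mul_le_iff₀ hn]
      push_cast at h
      linarith
    have hys : |(s : ℝ) - y| ≤ n * δ := by
      rw [show (s : ℝ) - y = n / (n + 1) * (s - x) by simp [y]; field_simp; ring, abs_mul,
        abs_of_nonneg (by positivity), div_mul_eq_mul_div, div_le_iff₀ hn]
      push_cast at h
      nlinarith [Nat.cast_nonneg (α := ℝ) n]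
    calc |g s - g x| ≤ |g s - g y| + |g y - g x| := abs_sub_le _ _ _
      _ ≤ n * modCont g δ + modCont g δ := add_le_add (ih hys) (abs_sub_le_modCont g hxy)
      _ = (n + 1 : ℕ) * modCont g δ := by push_cast; ring

theorem abs_sub_le_modCont_mul {δ : ℝ} (hδ : 0 < δ) (s x : Set.Icc a b) :
    |g s - g x| ≤ modCont g δ * (1 + ((s : ℝ) - x) ^ 2 / δ ^ 2) := by
  set r := |(s : ℝ) - x| / δ
  have hsx : |(s : ℝ) - x| ≤ ⌈r⌉₊ * δ := (div_le_iff₀ hδ).mp (Nat.le_ceil r)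
  have hr : 1 + r ^ 2 = 1 + ((s : ℝ) - x) ^ 2 / δ ^ 2 := by rw [div_pow, sq_abs]
  calc |g s - g x| ≤ ⌈r⌉₊ * modCont g δ := abs_sub_le_nat_mul_modCont g _ hsx
    _ ≤ (1 + r ^ 2) * modCont g δ := by
      gcongr
      · exact modCont_nonneg g hδ.le x
      · exact Nat.ceil_le_one_add_sq r
    _ = _ := by rw [hr, mul_comm]

end ModulusOfContinuity

section PositiveOperator

variable {X Y : Type*} [TopologicalSpace X]

theorem apply_le_apply_of_forall_le {L : C(X, ℝ) →ₗ[ℝ] (Y → ℝ)}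
    (hL : ∀ f : C(X, ℝ), (∀ t, 0 ≤ f t) → ∀ y, 0 ≤ L f y)
    {f h : C(X, ℝ)} (hfh : ∀ t, f t ≤ h t) (y : Y) : L f y ≤ L h y := by
  simpa [map_sub] using hL (h - f) (fun t => by simpa using hfh t) y

theorem abs_apply_le_of_forall_abs_le {L : C(X, ℝ) →ₗ[ℝ] (Y → ℝ)}
    (hL : ∀ f : C(X, ℝ), (∀ t, 0 ≤ f t) → ∀ y, 0 ≤ L f y)
    {f h : C(X, ℝ)} (hfh : ∀ t, |f t| ≤ h t) (y : Y) : |L f y| ≤ L h y := by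
  refine abs_le.mpr ⟨?_, apply_le_apply_of_forall_le hL (fun t => (abs_le.mp (hfh t)).2) y⟩
  simpa using apply_le_apply_of_forall_le hL (f := -h)
    (fun t => by simpa using (abs_le.mp (hfh t)).1) y

theorem abs_apply_sub_le_of_forall_abs_sub_le {L : C(X, ℝ) →ₗ[ℝ] (X → ℝ)}
    (hL : ∀ f : C(X, ℝ), (∀ t, 0 ≤ f t) → ∀ y, 0 ≤ L f y)
    (g ψ : C(X, ℝ)) (x : X) {ω : ℝ} (hω : 0 ≤ ω) (hg : ∀ t, |g t - g x| ≤ ω * (1 + ψ t)) :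
    |L g x - g x| ≤ |g x| * |L 1 x - 1| + ω * (1 + |L 1 x - 1|) + ω * L ψ x := by
  have hbound : |L g x - g x * L 1 x| ≤ ω * (L 1 x + L ψ x) := by
    simpa [map_sub, map_smul, map_add, mul_add] using
      abs_apply_le_of_forall_abs_le hL (f := g - g x • 1) (h := ω • (1 + ψ))
        (fun t => by simpa [mul_add] using hg t) x
  have hL1 : ω * L 1 x ≤ ω * (1 + |L 1 x - 1|) :=
    mul_le_mul_of_nonneg_left (by linarith [le_abs_self (L 1 x - 1)]) hω
  calc |L g x - g x| = |(L g x - g x * L 1 x) + g x * (L 1 x - 1)| := by ring_nf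
    _ ≤ |L g x - g x * L 1 x| + |g x| * |L 1 x - 1| := by rw [← abs_mul]; exact abs_add_le _ _
    _ ≤ _ := by linarith

end PositiveOperator

/-- Pointwise Korovkin-type estimate for a positive linear operator. -/
theorem stmt6 {a b : ℝ}
    (L : C(Set.Icc a b, ℝ) →ₗ[ℝ] (Set.Icc a b → ℝ))
    (hL : ∀ f : C(Set.Icc a b, ℝ), (∀ t, 0 ≤ f t) → ∀ t, 0 ≤ L f t)
    (g : C(Set.Icc a b, ℝ)) (x : Set.Icc a b) (δ : ℝ) (hδ : 0 < δ) :
    |L g x - g x| ≤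
      |g x| * |L 1 x - 1| + modCont g δ * (1 + |L 1 x - 1|) +
        modCont g δ / δ ^ 2 *
          L (ContinuousMap.mk (fun s : Set.Icc a b => ((s : ℝ) - (x : ℝ)) ^ 2)
              (by fun_prop)) x := by
  set φ : C(Set.Icc a b, ℝ) := ⟨fun s => ((s : ℝ) - x) ^ 2, by fun_prop⟩
  have h := abs_apply_sub_le_of_forall_abs_sub_le hL g ((δ ^ 2)⁻¹ • φ) x
    (modCont_nonneg g hδ.le x) fun t => by
      simpa [φ, div_eq_inv_mul] using abs_sub_le_modCont_mul g hδ t x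
  rwa [map_smul, Pi.smul_apply, smul_eq_mul, ← mul_assoc, ← div_eq_mul_inv] at h
end

section
/- First moment of the q-Lagrange-Hermite operator: For the operator R_{n,q}^{α⁽¹⁾,…,α⁽ʳ⁾} and g(s) = s, one has R_{n,q}^{α⁽¹⁾,…,α⁽ʳ⁾}(s; x) = x·αₙ⁽¹⁾ for all x ∈ [0,1]. -/
/-!
Put `tₖ = αₖ x^(k+1)` and `c_m = (qⁿ;q)_m / (q;q)_m`. For `g(s) = s` the summand indexed by
`l` is `∏ₖ c_{lₖ} tₖ^{lₖ}`, times the weight `[l₁]_q / [n+l₁-1]_q` on the first factor, so the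
series splits into a product of `r` one-variable series. The q-binomial theorem
`∑ₘ c_m tᵐ = 1/(t;q)ₙ` (by induction on `n`: `1/(t;q)ₙ₊₁` is the Cauchy product of `1/(t;q)ₙ` with
the geometric series of `qⁿt`) cancels every prefactor `(tₖ;q)ₙ` with `k ≥ 2`. For `k = 1` the
identity `c_{m+1} [m+1]_q / [n+m]_q = c_m` shifts the series by one, giving `t₁ / (t₁;q)ₙ`. What
remains is `t₁ = α₁ x`.
-/

open Filter

/-- The q-integer `[m]_q = (1 - q^m)/(1 - q)`. -/
noncomputable def qInt (q : ℝ) (m : ℕ) : ℝ := (1 - q ^ m) / (1 - q)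

/-- The q-Pochhammer symbol `(ρ;q)_m = ∏_{j=0}^{m-1} (1 - ρ qʲ)`. -/
noncomputable def qPoch (ρ q : ℝ) (m : ℕ) : ℝ := ∏ j ∈ Finset.range m, (1 - ρ * q ^ j)

/-- The multivariate q-Lagrange-Hermite operator
`R_{n,q}^{α⁽¹⁾,…,α⁽ʳ⁾}(g;x)`, written as an absolutely rearranged sum over the
multi-indices `l = (l₁,…,l_r)` with `x^{l₁+2l₂+⋯+r·l_r}`. -/
noncomputable def LHOp (q : ℝ) (n r : ℕ) (hr : 0 < r) (α : Fin r → ℝ)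
    (g : ℝ → ℝ) (x : ℝ) : ℝ :=
  (∏ i : Fin r, qPoch (α i * x ^ ((i : ℕ) + 1)) q n) *
    ∑' l : Fin r → ℕ,
      (∏ k : Fin r, qPoch (q ^ n) q (l k) * α k ^ (l k) / qPoch q q (l k)) *
        g (qInt q (l ⟨0, hr⟩) / qInt q (n + l ⟨0, hr⟩ - 1)) *
        x ^ (∑ k : Fin r, ((k : ℕ) + 1) * l k)

open Finset

theorem qPoch_zero (ρ q : ℝ) : qPoch ρ q 0 = 1 := prod_range_zero _

theorem qPoch_succ (ρ q : ℝ) (m : ℕ) : qPoch ρ q (m + 1) = qPoch ρ q m * (1 - ρ * q ^ m) :=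
  prod_range_succ _ m

theorem qPoch_succ' (ρ q : ℝ) (m : ℕ) : qPoch ρ q (m + 1) = (1 - ρ) * qPoch (ρ * q) q m := by
  simp only [qPoch, prod_range_succ', pow_zero, mul_one, pow_succ, mul_assoc, mul_comm q]
  ring

theorem qPoch_nonneg {ρ q : ℝ} (hρ1 : ρ ≤ 1) (hq0 : 0 ≤ q) (hq1 : q ≤ 1) (m : ℕ) :
    0 ≤ qPoch ρ q m :=
  prod_nonneg fun j _ => sub_nonneg.2 <| mul_le_one₀ hρ1 (pow_nonneg hq0 j) (pow_le_one₀ hq0 hq1)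

theorem qPoch_pos {ρ q : ℝ} (hρ1 : ρ < 1) (hq0 : 0 ≤ q) (hq1 : q ≤ 1) (m : ℕ) :
    0 < qPoch ρ q m :=
  prod_pos fun j _ => sub_pos.2 <| by
    rcases le_or_gt ρ 0 with hρ | hρ
    · nlinarith [pow_nonneg hq0 j]
    · nlinarith [pow_le_one₀ (n := j) hq0 hq1]

theorem qInt_nonneg {q : ℝ} (hq0 : 0 ≤ q) (hq1 : q < 1) (m : ℕ) : 0 ≤ qInt q m :=
  div_nonneg (sub_nonneg.2 (pow_le_one₀ hq0 hq1.le)) (sub_nonneg.2 hq1.le)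

/-- The Gaussian binomial `[n+m-1, m]_q`, i.e. the coefficient of `tᵐ` in `1/(t;q)ₙ`. -/
noncomputable def qNegBinomCoeff (q : ℝ) (n m : ℕ) : ℝ := qPoch (q ^ n) q m / qPoch q q m

theorem qNegBinomCoeff_zero_right (q : ℝ) (n : ℕ) : qNegBinomCoeff q n 0 = 1 := by
  simp [qNegBinomCoeff, qPoch_zero]

theorem qNegBinomCoeff_zero_succ (q : ℝ) (m : ℕ) : qNegBinomCoeff q 0 (m + 1) = 0 := by
  simp [qNegBinomCoeff, qPoch_succ']

theorem qNegBinomCoeff_nonneg {q : ℝ} (hq0 : 0 ≤ q) (hq1 : q < 1) (n m : ℕ) :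
    0 ≤ qNegBinomCoeff q n m :=
  div_nonneg (qPoch_nonneg (pow_le_one₀ hq0 hq1.le) hq0 hq1.le m)
    (qPoch_pos hq1 hq0 hq1.le m).le

theorem qNegBinomCoeff_succ {q : ℝ} (n m : ℕ) (hq : qPoch q q (m + 1) ≠ 0) :
    qNegBinomCoeff q n (m + 1) =
      qNegBinomCoeff q n m * (1 - q ^ (n + m)) / (1 - q ^ (m + 1)) := by
  rw [qPoch_succ, mul_ne_zero_iff] at hq
  simp only [qNegBinomCoeff, qPoch_succ, ← pow_add, ← pow_succ']
  field_simp [hq.1, hq.2]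

theorem qNegBinomCoeff_succ_succ {q : ℝ} (n m : ℕ) (hq : qPoch q q (m + 1) ≠ 0) :
    qNegBinomCoeff q (n + 1) (m + 1) =
      qNegBinomCoeff q n (m + 1) + q ^ n * qNegBinomCoeff q (n + 1) m := by
  rw [qPoch_succ, mul_ne_zero_iff, mul_comm q] at hq
  rw [qNegBinomCoeff, qNegBinomCoeff, qNegBinomCoeff, qPoch_succ, qPoch_succ, qPoch_succ',
    ← pow_succ]
  field_simp [hq.1, hq.2]
  ring

theorem qNegBinomCoeff_succ_eq_sum_antidiagonal {q : ℝ} (hq0 : 0 ≤ q) (hq1 : q < 1) (n m : ℕ) :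
    qNegBinomCoeff q (n + 1) m =
      ∑ ij ∈ antidiagonal m, qNegBinomCoeff q n ij.1 * (q ^ n) ^ ij.2 := by
  induction m with
  | zero => simp [qNegBinomCoeff_zero_right]
  | succ m ih =>
    rw [qNegBinomCoeff_succ_succ n m (qPoch_pos hq1 hq0 hq1.le _).ne', ih,
      Nat.sum_antidiagonal_succ', mul_sum]
    simp only [pow_zero, mul_one, pow_succ]
    congr 1
    exact sum_congr rfl fun _ _ => by ring

theorem HasSum.sum_antidiagonal_mul_of_nonneg {f g : ℕ → ℝ} {a b : ℝ} (hf : HasSum f a)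
    (hg : HasSum g b) (hf0 : 0 ≤ f) (hg0 : 0 ≤ g) :
    HasSum (fun n => ∑ kl ∈ antidiagonal n, f kl.1 * g kl.2) (a * b) := by
  have hfg := hf.summable.mul_of_nonneg hg.summable hf0 hg0
  rw [← hf.tsum_eq, ← hg.tsum_eq,
    hf.summable.tsum_mul_tsum_eq_tsum_sum_antidiagonal hg.summable hfg]
  exact (summable_sum_mul_antidiagonal_of_summable_mul hfg).hasSum

/-- The q-binomial theorem `∑ₘ (qⁿ;q)ₘ/(q;q)ₘ tᵐ = 1/(t;q)ₙ`. -/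
theorem hasSum_qNegBinomCoeff_mul_pow {q t : ℝ} (hq0 : 0 ≤ q) (hq1 : q < 1) (ht0 : 0 ≤ t)
    (ht1 : t < 1) (n : ℕ) :
    HasSum (fun m => qNegBinomCoeff q n m * t ^ m) (qPoch t q n)⁻¹ := by
  induction n with
  | zero =>
    rw [qPoch_zero, inv_one]
    convert hasSum_ite_eq 0 (1 : ℝ) with m
    cases m <;> simp [qNegBinomCoeff_zero_right, qNegBinomCoeff_zero_succ]
  | succ n ih =>
    have hqt : q ^ n * t < 1 := by nlinarith [pow_le_one₀ (n := n) hq0 hq1.le]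
    have hgeom := hasSum_geometric_of_lt_one (by positivity) hqt
    convert ih.sum_antidiagonal_mul_of_nonneg hgeom
      (fun m => mul_nonneg (qNegBinomCoeff_nonneg hq0 hq1 n m) (pow_nonneg ht0 m))
      (fun m => by positivity) using 1
    · ext m
      rw [qNegBinomCoeff_succ_eq_sum_antidiagonal hq0 hq1, sum_mul]
      refine sum_congr rfl fun ij hij => ?_
      rw [← mem_antidiagonal.1 hij]
      ring
    · rw [qPoch_succ, mul_inv, mul_comm t]

theorem qNegBinomCoeff_succ_mul_qInt_div {q : ℝ} (hq0 : 0 ≤ q) (hq1 : q < 1) {n : ℕ}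
    (hn : 1 ≤ n) (m : ℕ) :
    qNegBinomCoeff q n (m + 1) * (qInt q (m + 1) / qInt q (n + (m + 1) - 1)) =
      qNegBinomCoeff q n m := by
  have hq : 1 - q ≠ 0 := by linarith
  have hm : 1 - q ^ (m + 1) ≠ 0 := (sub_pos.2 (pow_lt_one₀ hq0 hq1 m.succ_ne_zero)).ne'
  have hnm : 1 - q ^ (n + m) ≠ 0 := (sub_pos.2 (pow_lt_one₀ hq0 hq1 (by omega))).ne'
  rw [qNegBinomCoeff_succ n m (qPoch_pos hq1 hq0 hq1.le _).ne', qInt, qInt,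
    show n + (m + 1) - 1 = n + m by omega]
  field_simp

theorem hasSum_qNegBinomCoeff_mul_pow_mul_qInt_div {q t : ℝ} (hq0 : 0 ≤ q) (hq1 : q < 1)
    (ht0 : 0 ≤ t) (ht1 : t < 1) {n : ℕ} (hn : 1 ≤ n) :
    HasSum (fun m => qNegBinomCoeff q n m * t ^ m * (qInt q m / qInt q (n + m - 1)))
      (t * (qPoch t q n)⁻¹) := by
  have hshift (m : ℕ) : qNegBinomCoeff q n (m + 1) * t ^ (m + 1) *
      (qInt q (m + 1) / qInt q (n + (m + 1) - 1)) = t * (qNegBinomCoeff q n m * t ^ m) := by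
    rw [← qNegBinomCoeff_succ_mul_qInt_div hq0 hq1 hn m]
    ring
  have hqInt0 : qInt q 0 = 0 := by simp [qInt]
  rw [← hasSum_nat_add_iff' 1]
  simp only [hshift, range_one, sum_singleton, hqInt0, zero_div, mul_zero, sub_zero]
  exact (hasSum_qNegBinomCoeff_mul_pow hq0 hq1 ht0 ht1 n).mul_left t

theorem HasSum.fin_pi_prod_of_nonneg {β : Type*} {r : ℕ} {G : Fin r → β → ℝ} {S : Fin r → ℝ}
    (hG : ∀ k b, 0 ≤ G k b) (hS : ∀ k, HasSum (G k) (S k)) :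
    HasSum (fun l : Fin r → β => ∏ k, G k (l k)) (∏ k, S k) := by
  induction r with
  | zero => simp
  | succ r ih =>
    have htail := ih (fun k => hG k.succ) (fun k => hS k.succ)
    have htail_nonneg : 0 ≤ fun l : Fin r → β => ∏ k, G k.succ (l k) :=
      fun l => prod_nonneg fun k _ => hG k.succ (l k)
    have hsum := (hS 0).summable.mul_of_nonneg htail.summable (fun b => hG 0 b : 0 ≤ G 0)
      htail_nonneg
    have hprod := HasSum.mul (hS 0) htail hsum
    rw [Fin.prod_univ_succ, ← (Fin.consEquiv fun _ => β).hasSum_iff]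
    exact hprod.congr_fun fun p => by simp [Fin.consEquiv, Fin.prod_univ_succ]

theorem LHOp_eq_mul_tsum_prod (q : ℝ) (n r : ℕ) (hr : 0 < r) (α : Fin r → ℝ) (g : ℝ → ℝ)
    (x : ℝ) :
    LHOp q n r hr α g x = (∏ k, qPoch (α k * x ^ ((k : ℕ) + 1)) q n) *
      ∑' l : Fin r → ℕ, ∏ k, qNegBinomCoeff q n (l k) * (α k * x ^ ((k : ℕ) + 1)) ^ (l k) *
        if k = ⟨0, hr⟩ then g (qInt q (l k) / qInt q (n + l k - 1)) else 1 := by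
  refine congrArg _ (tsum_congr fun l => ?_)
  rw [prod_mul_distrib, prod_ite_eq' univ, if_pos (mem_univ _), ← prod_pow_eq_pow_sum,
    mul_right_comm, ← prod_mul_distrib]
  refine congrArg (· * _) (prod_congr rfl fun k _ => ?_)
  rw [qNegBinomCoeff, mul_pow, ← pow_mul]
  ring

/-- First moment: `R_{n,q}^{α⁽¹⁾,…,α⁽ʳ⁾}(s;x) = x·αₙ⁽¹⁾`. -/
theorem stmt13 (q : ℝ) (hq : 0 < q) (hq1 : q < 1) (r : ℕ) (hr : 0 < r)
    (α : Fin r → ℝ) (hα : ∀ i, α i ∈ Set.Ioo (0 : ℝ) 1) (x : ℝ)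
    (hx : x ∈ Set.Icc (0 : ℝ) 1) (n : ℕ) (hn : 1 ≤ n) :
    LHOp q n r hr α (fun s => s) x = x * α ⟨0, hr⟩ := by
  set k₀ : Fin r := ⟨0, hr⟩
  set t : Fin r → ℝ := fun k => α k * x ^ ((k : ℕ) + 1)
  have ht0 (k : Fin r) : 0 ≤ t k := mul_nonneg (hα k).1.le (pow_nonneg hx.1 _)
  have ht1 (k : Fin r) : t k < 1 :=
    mul_lt_one_of_nonneg_of_lt_one_left (hα k).1.le (hα k).2 (pow_le_one₀ hx.1 hx.2)
  have hfactor (k : Fin r) : HasSum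
      (fun m => qNegBinomCoeff q n m * t k ^ m *
        if k = k₀ then qInt q m / qInt q (n + m - 1) else 1)
      ((if k = k₀ then t k else 1) * (qPoch (t k) q n)⁻¹) := by
    split_ifs
    · exact hasSum_qNegBinomCoeff_mul_pow_mul_qInt_div hq.le hq1 (ht0 k) (ht1 k) hn
    · simpa using hasSum_qNegBinomCoeff_mul_pow hq.le hq1 (ht0 k) (ht1 k) n
  have hnonneg (k : Fin r) (m : ℕ) : 0 ≤ qNegBinomCoeff q n m * t k ^ m *
      if k = k₀ then qInt q m / qInt q (n + m - 1) else 1 := by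
    refine mul_nonneg (mul_nonneg (qNegBinomCoeff_nonneg hq.le hq1 n m) (pow_nonneg (ht0 k) m)) ?_
    split_ifs
    · exact div_nonneg (qInt_nonneg hq.le hq1 _) (qInt_nonneg hq.le hq1 _)
    · exact zero_le_one
  rw [LHOp_eq_mul_tsum_prod, (HasSum.fin_pi_prod_of_nonneg hnonneg hfactor).tsum_eq,
    ← prod_mul_distrib]
  calc ∏ k, qPoch (t k) q n * ((if k = k₀ then t k else 1) * (qPoch (t k) q n)⁻¹)
      = ∏ k, if k = k₀ then t k else 1 := prod_congr rfl fun k _ => by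
        rw [mul_left_comm, mul_inv_cancel₀ (qPoch_pos (ht1 k) hq.le hq1.le n).ne', mul_one]
    _ = x * α k₀ := by simp [t, k₀, mul_comm]
end

section
/- Central second moment estimate: |R_{n,q}^{α⁽¹⁾,…,α⁽ʳ⁾}(s²; x) − x²| ≤ 2x²(1 − αₙ⁽¹⁾) + x αₙ⁽¹⁾/[n]_q for all x ∈ [0,1], assuming 0 < q < 1 and αₙ⁽¹⁾ ∈ (0,1). -/
open Filter

namespace QLH

noncomputable def cc (q : ℝ) (n l : ℕ) : ℝ := qPoch (q ^ n) q l / qPoch q q l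

noncomputable def rr (q : ℝ) (n l : ℕ) : ℝ := qInt q l / qInt q (n + l - 1)

variable {q t : ℝ}

lemma qPoch_succ (ρ q : ℝ) (m : ℕ) : qPoch ρ q (m + 1) = qPoch ρ q m * (1 - ρ * q ^ m) :=
  Finset.prod_range_succ _ m

lemma qPoch_nonneg (hq0 : 0 ≤ q) (hq1 : q ≤ 1) {ρ : ℝ} (hρ0 : 0 ≤ ρ) (hρ1 : ρ ≤ 1) (m : ℕ) :
    0 ≤ qPoch ρ q m := by
  refine Finset.prod_nonneg fun j _ => ?_
  have h1 : q ^ j ≤ 1 := pow_le_one₀ hq0 hq1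
  have h2 : 0 ≤ q ^ j := pow_nonneg hq0 j
  nlinarith

lemma qPoch_pos (hq0 : 0 ≤ q) (hq1 : q ≤ 1) {ρ : ℝ} (hρ0 : 0 ≤ ρ) (hρ1 : ρ < 1) (m : ℕ) :
    0 < qPoch ρ q m := by
  refine Finset.prod_pos fun j _ => ?_
  have h1 : q ^ j ≤ 1 := pow_le_one₀ hq0 hq1
  have h2 : 0 ≤ q ^ j := pow_nonneg hq0 j
  nlinarith

lemma qPoch_q_pos (hq0 : 0 ≤ q) (hq1 : q < 1) (m : ℕ) : 0 < qPoch q q m :=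
  qPoch_pos hq0 hq1.le hq0 hq1 m

lemma one_sub_pow_pos (hq0 : 0 ≤ q) (hq1 : q < 1) {m : ℕ} (hm : 1 ≤ m) : 0 < 1 - q ^ m := by
  have := pow_lt_one₀ hq0 hq1 (Nat.one_le_iff_ne_zero.mp hm)
  linarith

lemma cc_zero (n : ℕ) : cc q n 0 = 1 := by simp [cc, qPoch]

lemma cc_nonneg (hq0 : 0 ≤ q) (hq1 : q < 1) (n l : ℕ) : 0 ≤ cc q n l :=
  div_nonneg (qPoch_nonneg hq0 hq1.le (pow_nonneg hq0 n) (pow_le_one₀ hq0 hq1.le) l)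
    (qPoch_q_pos hq0 hq1 l).le

lemma cc_succ (hq0 : 0 < q) (hq1 : q < 1) (n l : ℕ) :
    cc q n (l + 1) = cc q n l * ((1 - q ^ (n + l)) / (1 - q ^ (l + 1))) := by
  have hD : qPoch q q l ≠ 0 := (qPoch_q_pos hq0.le hq1 l).ne'
  have hl1 : (1 : ℝ) - q ^ (l + 1) ≠ 0 := (one_sub_pow_pos hq0.le hq1 (Nat.le_add_left 1 l)).ne'
  rw [cc, cc, qPoch_succ, qPoch_succ]
  rw [show q ^ n * q ^ l = q ^ (n + l) by rw [← pow_add], show q * q ^ l = q ^ (l + 1) by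
    rw [pow_succ]; ring]
  field_simp

lemma qPoch_pow_shift (n l : ℕ) :
    qPoch (q ^ n) q (l + 1) = (1 - q ^ n) * qPoch (q ^ (n + 1)) q l := by
  rw [qPoch, Finset.prod_range_succ', qPoch]
  simp only [pow_zero, mul_one]
  rw [mul_comm]
  congr 1
  refine Finset.prod_congr rfl fun j _ => ?_
  rw [← pow_add, ← pow_add]
  ring_nf

lemma cc_pascal (hq0 : 0 < q) (hq1 : q < 1) (n l : ℕ) :
    cc q (n + 1) (l + 1) = cc q n (l + 1) + q ^ n * cc q (n + 1) l := by
  have hD : qPoch q q l ≠ 0 := (qPoch_q_pos hq0.le hq1 l).ne'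
  have hD1 : qPoch q q (l + 1) ≠ 0 := (qPoch_q_pos hq0.le hq1 (l + 1)).ne'
  have e1 : qPoch (q ^ (n + 1)) q (l + 1) = qPoch (q ^ (n + 1)) q l * (1 - q ^ (n + 1 + l)) := by
    rw [qPoch_succ, ← pow_add]
  have e2 : qPoch (q ^ n) q (l + 1) = (1 - q ^ n) * qPoch (q ^ (n + 1)) q l :=
    qPoch_pow_shift n l
  have e3 : qPoch q q (l + 1) = qPoch q q l * (1 - q ^ (l + 1)) := by
    rw [qPoch_succ, ← pow_succ']
  rw [cc, cc, cc, e1, e2, e3]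
  have hl1 : (1 : ℝ) - q ^ (l + 1) ≠ 0 := (one_sub_pow_pos hq0.le hq1 (Nat.le_add_left 1 l)).ne'
  field_simp
  ring_nf

lemma summable_cc (hq0 : 0 < q) (hq1 : q < 1) (ht0 : 0 ≤ t) (ht1 : t < 1) (n : ℕ) :
    Summable (fun l => cc q n l * t ^ l) := by
  refine summable_of_ratio_norm_eventually_le (r := (1 + t) / 2) (by linarith) ?_
  have hc : (0:ℝ) < (1 - t) / (1 + t) := div_pos (by linarith) (by linarith)
  have hev : ∀ᶠ l in atTop, q ^ l < (1 - t) / (1 + t) :=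
    (tendsto_pow_atTop_nhds_zero_of_lt_one hq0.le hq1).eventually_lt_const hc
  filter_upwards [hev] with l hl
  have hccl : 0 ≤ cc q n l * t ^ l := mul_nonneg (cc_nonneg hq0.le hq1 n l) (pow_nonneg ht0 l)
  have hql1 : q ^ (l + 1) ≤ q ^ l := by
    calc q ^ (l + 1) = q ^ l * q := pow_succ q l
    _ ≤ q ^ l * 1 := by nlinarith [pow_nonneg hq0.le l]
    _ = q ^ l := mul_one _
  have hl1pos : (0:ℝ) < 1 - q ^ (l + 1) := one_sub_pow_pos hq0.le hq1 (Nat.le_add_left 1 l)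
  have hnl : 0 ≤ q ^ (n + l) := pow_nonneg hq0.le _
  have hnl1 : q ^ (n + l) ≤ 1 := pow_le_one₀ hq0.le hq1.le
  have key : cc q n (l + 1) * t ^ (l + 1) ≤ (1 + t) / 2 * (cc q n l * t ^ l) := by
    rw [cc_succ hq0 hq1, pow_succ]
    have hratio : (1 - q ^ (n + l)) / (1 - q ^ (l + 1)) * t ≤ (1 + t) / 2 := by
      have h1 : (1 - q ^ (n + l)) / (1 - q ^ (l + 1)) ≤ 1 / (1 - q ^ (l + 1)) := by
        exact (div_le_div_iff_of_pos_right hl1pos).mpr (by nlinarith)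
      have h2 : 1 / (1 - q ^ (l + 1)) * t ≤ (1 + t) / 2 := by
        rw [div_mul_eq_mul_div, one_mul, div_le_div_iff₀ hl1pos (by norm_num)]
        have : q ^ (l + 1) * (1 + t) ≤ 1 - t := by
          have := mul_le_mul_of_nonneg_right (le_of_lt (lt_of_le_of_lt hql1 hl))
            (by linarith : (0:ℝ) ≤ 1 + t)
          rw [div_mul_cancel₀] at this <;> linarith
        nlinarith
      calc (1 - q ^ (n + l)) / (1 - q ^ (l + 1)) * t ≤ 1 / (1 - q ^ (l + 1)) * t := by
            apply mul_le_mul_of_nonneg_right h1 ht0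
      _ ≤ (1 + t) / 2 := h2
    calc cc q n l * ((1 - q ^ (n + l)) / (1 - q ^ (l + 1))) * (t ^ l * t)
        = ((1 - q ^ (n + l)) / (1 - q ^ (l + 1)) * t) * (cc q n l * t ^ l) := by ring
      _ ≤ (1 + t) / 2 * (cc q n l * t ^ l) := by
          apply mul_le_mul_of_nonneg_right hratio hccl
  have hcc1 : 0 ≤ cc q n (l + 1) * t ^ (l + 1) :=
    mul_nonneg (cc_nonneg hq0.le hq1 n _) (pow_nonneg ht0 _)
  rw [Real.norm_eq_abs, Real.norm_eq_abs, abs_of_nonneg hcc1, abs_of_nonneg hccl]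
  exact key

lemma tsum_cc_mul_qPoch (hq0 : 0 < q) (hq1 : q < 1) (ht0 : 0 ≤ t) (ht1 : t < 1) :
    ∀ n : ℕ, (∑' l, cc q n l * t ^ l) * qPoch t q n = 1 := by
  intro n
  induction n with
  | zero =>
    have h0 : ∀ l, l ≠ 0 → cc q 0 l * t ^ l = 0 := by
      intro l hl
      have h1 : qPoch (1:ℝ) q l = 0 := by
        refine Finset.prod_eq_zero (Finset.mem_range.mpr (Nat.pos_of_ne_zero hl)) ?_
        simp
      simp [cc, pow_zero, h1]
    rw [tsum_eq_single 0 h0]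
    simp [cc_zero, qPoch]
  | succ n ih =>
    have hsumn : Summable (fun l => cc q n l * t ^ l) := summable_cc hq0 hq1 ht0 ht1 n
    have hsum : Summable (fun l => cc q (n + 1) l * t ^ l) := summable_cc hq0 hq1 ht0 ht1 (n + 1)
    have hshift : Summable (fun l => cc q (n + 1) (l + 1) * t ^ (l + 1)) :=
      (summable_nat_add_iff (f := fun l => cc q (n + 1) l * t ^ l) 1).mpr hsum
    have hshiftn : Summable (fun l => cc q n (l + 1) * t ^ (l + 1)) :=
      (summable_nat_add_iff (f := fun l => cc q n l * t ^ l) 1).mpr hsumn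
    have hmul : Summable (fun l => q ^ n * t * (cc q (n + 1) l * t ^ l)) := hsum.mul_left _
    have e2 : (fun l => cc q (n + 1) (l + 1) * t ^ (l + 1)) =
        fun l => cc q n (l + 1) * t ^ (l + 1) + q ^ n * t * (cc q (n + 1) l * t ^ l) := by
      funext l
      rw [cc_pascal hq0 hq1, pow_succ]
      ring
    have key : (∑' l, cc q (n + 1) l * t ^ l) * (1 - q ^ n * t)
        = ∑' l, cc q n l * t ^ l := by
      have e1 : (∑' l, cc q (n + 1) l * t ^ l)
          = 1 + ∑' l, cc q (n + 1) (l + 1) * t ^ (l + 1) := by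
        rw [Summable.tsum_eq_zero_add hsum, cc_zero]
        norm_num
      have e3 : ∑' l, cc q (n + 1) (l + 1) * t ^ (l + 1) =
          (∑' l, cc q n (l + 1) * t ^ (l + 1)) + q ^ n * t * ∑' l, cc q (n + 1) l * t ^ l := by
        rw [e2, Summable.tsum_add hshiftn hmul, tsum_mul_left]
      have e4 : 1 + ∑' l, cc q n (l + 1) * t ^ (l + 1) = ∑' l, cc q n l * t ^ l := by
        rw [Summable.tsum_eq_zero_add hsumn, cc_zero]
        norm_num
      nlinarith [e1, e3, e4]
    rw [qPoch_succ]
    calc (∑' l, cc q (n + 1) l * t ^ l) * (qPoch t q n * (1 - t * q ^ n))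
        = ((∑' l, cc q (n + 1) l * t ^ l) * (1 - q ^ n * t)) * qPoch t q n := by ring
      _ = (∑' l, cc q n l * t ^ l) * qPoch t q n := by rw [key]
      _ = 1 := ih


lemma qInt_nonneg (hq0 : 0 ≤ q) (hq1 : q < 1) (m : ℕ) : 0 ≤ qInt q m :=
  div_nonneg (by nlinarith [pow_le_one₀ hq0 hq1.le (n := m)]) (by linarith)

lemma qInt_pos (hq0 : 0 ≤ q) (hq1 : q < 1) {m : ℕ} (hm : 1 ≤ m) : 0 < qInt q m :=
  div_pos (one_sub_pow_pos hq0 hq1 hm) (by linarith)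

lemma qInt_mono (hq0 : 0 ≤ q) (hq1 : q < 1) {m m' : ℕ} (h : m ≤ m') : qInt q m ≤ qInt q m' := by
  have := pow_le_pow_of_le_one hq0 hq1.le h
  exact (div_le_div_iff_of_pos_right (by linarith)).mpr (by linarith)

lemma qInt_zero : qInt q 0 = 0 := by simp [qInt]

lemma rr_zero (n : ℕ) : rr q n 0 = 0 := by simp [rr, qInt_zero]

lemma rr_nonneg (hq0 : 0 ≤ q) (hq1 : q < 1) (n l : ℕ) : 0 ≤ rr q n l :=
  div_nonneg (qInt_nonneg hq0 hq1 l) (qInt_nonneg hq0 hq1 _)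

lemma rr_le_one (hq0 : 0 ≤ q) (hq1 : q < 1) {n : ℕ} (hn : 1 ≤ n) (l : ℕ) : rr q n l ≤ 1 := by
  rcases Nat.eq_zero_or_pos l with rfl | hl
  · rw [rr_zero]; norm_num
  · apply div_le_one_of_le₀ (qInt_mono hq0 hq1 (by omega)) (qInt_nonneg hq0 hq1 _)

lemma rr_succ_eq (hq0 : 0 < q) (hq1 : q < 1) {n : ℕ} (hn : 1 ≤ n) (l : ℕ) :
    rr q n (l + 1) = (1 - q ^ (l + 1)) / (1 - q ^ (n + l)) := by
  have h : n + (l + 1) - 1 = n + l := by omega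
  rw [rr, h, qInt, qInt]
  rw [div_div_div_cancel_right₀]
  · exact (by linarith : (1:ℝ) - q ≠ 0)

lemma cc_mul_rr_succ (hq0 : 0 < q) (hq1 : q < 1) {n : ℕ} (hn : 1 ≤ n) (l : ℕ) :
    cc q n (l + 1) * rr q n (l + 1) = cc q n l := by
  rw [rr_succ_eq hq0 hq1 hn, cc_succ hq0 hq1]
  have h1 : (1:ℝ) - q ^ (l + 1) ≠ 0 := (one_sub_pow_pos hq0.le hq1 (by omega)).ne'
  have h2 : (1:ℝ) - q ^ (n + l) ≠ 0 := (one_sub_pow_pos hq0.le hq1 (by omega)).ne'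
  field_simp

lemma qInt_succ (hq1 : q < 1) (l : ℕ) : qInt q (l + 1) = 1 + q * qInt q l := by
  rw [qInt, qInt, pow_succ]
  have : (1:ℝ) - q ≠ 0 := by intro h; nlinarith
  field_simp
  ring

lemma rr_succ_le (hq0 : 0 < q) (hq1 : q < 1) {n : ℕ} (hn : 1 ≤ n) (l : ℕ) :
    rr q n (l + 1) ≤ 1 / qInt q n + q * rr q n l := by
  have hden : 0 < qInt q (n + l) := qInt_pos hq0.le hq1 (by omega)
  have h : n + (l + 1) - 1 = n + l := by omega
  have e1 : rr q n (l + 1) = 1 / qInt q (n + l) + q * (qInt q l / qInt q (n + l)) := by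
    rw [rr, h, qInt_succ hq1]
    field_simp
  rw [e1]
  have h2 : 1 / qInt q (n + l) ≤ 1 / qInt q n :=
    div_le_div_of_nonneg_left one_pos.le (qInt_pos hq0.le hq1 hn) (qInt_mono hq0.le hq1 (by omega))
  have h3 : qInt q l / qInt q (n + l) ≤ rr q n l := by
    rcases Nat.eq_zero_or_pos l with rfl | hl
    · rw [rr_zero, qInt_zero, zero_div]
    · rw [rr]
      exact div_le_div_of_nonneg_left (qInt_nonneg hq0.le hq1 l)
        (qInt_pos hq0.le hq1 (by omega)) (qInt_mono hq0.le hq1 (by omega))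
  nlinarith [h2, h3, hq0]

-- summabilities for weighted sums
lemma summable_cc_rr (hq0 : 0 < q) (hq1 : q < 1) (ht0 : 0 ≤ t) (ht1 : t < 1)
    {n : ℕ} (hn : 1 ≤ n) :
    Summable (fun l => cc q n l * t ^ l * rr q n l) := by
  refine (summable_cc hq0 hq1 ht0 ht1 n).of_nonneg_of_le
    (fun l => mul_nonneg (mul_nonneg (cc_nonneg hq0.le hq1 n l) (pow_nonneg ht0 l))
      (rr_nonneg hq0.le hq1 n l)) (fun l => ?_)
  have h := mul_nonneg (cc_nonneg hq0.le hq1 n l) (pow_nonneg ht0 l)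
  nlinarith [rr_le_one hq0.le hq1 hn l, rr_nonneg hq0.le hq1 n l]

lemma summable_cc_rr_sq (hq0 : 0 < q) (hq1 : q < 1) (ht0 : 0 ≤ t) (ht1 : t < 1)
    {n : ℕ} (hn : 1 ≤ n) :
    Summable (fun l => cc q n l * t ^ l * rr q n l ^ 2) := by
  refine (summable_cc hq0 hq1 ht0 ht1 n).of_nonneg_of_le
    (fun l => mul_nonneg (mul_nonneg (cc_nonneg hq0.le hq1 n l) (pow_nonneg ht0 l))
      (sq_nonneg _)) (fun l => ?_)
  have h := mul_nonneg (cc_nonneg hq0.le hq1 n l) (pow_nonneg ht0 l)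
  have h1 := rr_le_one hq0.le hq1 hn l
  have h2 := rr_nonneg hq0.le hq1 n l
  nlinarith [mul_nonneg h (sub_nonneg.mpr (by nlinarith : rr q n l ^ 2 ≤ 1))]

-- Lemma B: first moment
lemma tsum_cc_rr (hq0 : 0 < q) (hq1 : q < 1) (ht0 : 0 ≤ t) (ht1 : t < 1)
    {n : ℕ} (hn : 1 ≤ n) :
    ∑' l, cc q n l * t ^ l * rr q n l = t * ∑' l, cc q n l * t ^ l := by
  rw [Summable.tsum_eq_zero_add (summable_cc_rr hq0 hq1 ht0 ht1 hn)]
  rw [rr_zero]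
  have e : (fun l => cc q n (l + 1) * t ^ (l + 1) * rr q n (l + 1)) =
      fun l => t * (cc q n l * t ^ l) := by
    funext l
    have := cc_mul_rr_succ hq0 hq1 hn (q := q) l
    calc cc q n (l + 1) * t ^ (l + 1) * rr q n (l + 1)
        = (cc q n (l + 1) * rr q n (l + 1)) * t ^ (l + 1) := by ring
      _ = cc q n l * t ^ (l + 1) := by rw [this]
      _ = t * (cc q n l * t ^ l) := by rw [pow_succ]; ring
  rw [e, tsum_mul_left]
  ring

-- Lemma C: second moment upper bound
lemma tsum_cc_rr_sq_le (hq0 : 0 < q) (hq1 : q < 1) (ht0 : 0 ≤ t) (ht1 : t < 1)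
    {n : ℕ} (hn : 1 ≤ n) :
    ∑' l, cc q n l * t ^ l * rr q n l ^ 2 ≤
      (q * t ^ 2 + t / qInt q n) * ∑' l, cc q n l * t ^ l := by
  have hsum := summable_cc hq0 hq1 ht0 ht1 n
  have hsumr := summable_cc_rr hq0 hq1 ht0 ht1 (q := q) hn
  have hsumr2 := summable_cc_rr_sq hq0 hq1 ht0 ht1 (q := q) hn
  rw [Summable.tsum_eq_zero_add hsumr2, rr_zero]
  have hshift : Summable (fun l => cc q n (l + 1) * t ^ (l + 1) * rr q n (l + 1) ^ 2) :=
    (summable_nat_add_iff (f := fun l => cc q n l * t ^ l * rr q n l ^ 2) 1).mpr hsumr2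
  have hrhs : Summable (fun l => cc q n l * t ^ (l + 1) / qInt q n
      + q * t * (cc q n l * t ^ l * rr q n l)) := by
    apply Summable.add
    · have : (fun l => cc q n l * t ^ (l+1) / qInt q n)
          = fun l => (t / qInt q n) * (cc q n l * t ^ l) := by
        funext l; rw [pow_succ]; ring
      rw [this]; exact hsum.mul_left _
    · exact hsumr.mul_left _
  have hle : ∀ l, cc q n (l + 1) * t ^ (l + 1) * rr q n (l + 1) ^ 2 ≤
      cc q n l * t ^ (l + 1) / qInt q n + q * t * (cc q n l * t ^ l * rr q n l) := by
    intro l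
    have key : cc q n (l + 1) * t ^ (l + 1) * rr q n (l + 1) ^ 2
        = cc q n l * t ^ (l + 1) * rr q n (l + 1) := by
      have := cc_mul_rr_succ hq0 hq1 hn (q := q) l
      calc cc q n (l + 1) * t ^ (l + 1) * rr q n (l + 1) ^ 2
          = (cc q n (l + 1) * rr q n (l + 1)) * t ^ (l + 1) * rr q n (l + 1) := by ring
        _ = cc q n l * t ^ (l + 1) * rr q n (l + 1) := by rw [this]
    rw [key]
    have hb := rr_succ_le hq0 hq1 hn (q := q) l
    have hct : 0 ≤ cc q n l * t ^ (l + 1) :=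
      mul_nonneg (cc_nonneg hq0.le hq1 n l) (pow_nonneg ht0 _)
    calc cc q n l * t ^ (l + 1) * rr q n (l + 1)
        ≤ cc q n l * t ^ (l + 1) * (1 / qInt q n + q * rr q n l) := by
          exact mul_le_mul_of_nonneg_left hb hct
      _ = cc q n l * t ^ (l + 1) / qInt q n + q * t * (cc q n l * t ^ l * rr q n l) := by
          rw [pow_succ]; ring
  calc cc q n 0 * t ^ 0 * 0 ^ 2 + ∑' l, cc q n (l + 1) * t ^ (l + 1) * rr q n (l + 1) ^ 2
      = ∑' l, cc q n (l + 1) * t ^ (l + 1) * rr q n (l + 1) ^ 2 := by ring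
    _ ≤ ∑' l, (cc q n l * t ^ (l + 1) / qInt q n + q * t * (cc q n l * t ^ l * rr q n l)) :=
        Summable.tsum_le_tsum hle hshift hrhs
    _ = (∑' l, (t / qInt q n) * (cc q n l * t ^ l))
        + ∑' l, q * t * (cc q n l * t ^ l * rr q n l) := by
        rw [← Summable.tsum_add (hsum.mul_left (t / qInt q n)) (hsumr.mul_left (q * t))]
        apply tsum_congr
        intro l
        rw [pow_succ]
        ring
    _ = (q * t ^ 2 + t / qInt q n) * ∑' l, cc q n l * t ^ l := by
        rw [tsum_mul_left, tsum_mul_left, tsum_cc_rr hq0 hq1 ht0 ht1 hn]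
        ring

-- Lemma E: lower bound via positivity
lemma tsum_cc_rr_sq_ge (hq0 : 0 < q) (hq1 : q < 1) (ht0 : 0 ≤ t) (ht1 : t < 1)
    {n : ℕ} (hn : 1 ≤ n) {x : ℝ} (hx0 : 0 ≤ x) :
    2 * x * ∑' l, cc q n l * t ^ l * rr q n l ≤
      (∑' l, cc q n l * t ^ l * rr q n l ^ 2) + x ^ 2 * ∑' l, cc q n l * t ^ l := by
  have hsum := summable_cc hq0 hq1 ht0 ht1 n
  have hsumr := summable_cc_rr hq0 hq1 ht0 ht1 (q := q) hn
  have hsumr2 := summable_cc_rr_sq hq0 hq1 ht0 ht1 (q := q) hn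
  rw [← tsum_mul_left, ← tsum_mul_left, ← Summable.tsum_add hsumr2 (hsum.mul_left _)]
  refine Summable.tsum_le_tsum (fun l => ?_) (hsumr.mul_left _) (hsumr2.add (hsum.mul_left _))
  have hct : 0 ≤ cc q n l * t ^ l := mul_nonneg (cc_nonneg hq0.le hq1 n l) (pow_nonneg ht0 l)
  nlinarith [sq_nonneg (rr q n l - x), hct, sq_nonneg (rr q n l - x), mul_nonneg hct (sq_nonneg (rr q n l - x))]

set_option maxHeartbeats 1000000 in
lemma tsum_pi_prod : ∀ (r : ℕ) (u : Fin r → ℕ → ℝ), (∀ k m, 0 ≤ u k m) → (∀ k, Summable (u k)) →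
    Summable (fun l : Fin r → ℕ => ∏ k, u k (l k)) ∧
      (∑' l : Fin r → ℕ, ∏ k, u k (l k)) = ∏ k, ∑' m, u k m := by
  intro r
  induction r with
  | zero =>
    intro u _ _
    constructor
    · exact .of_finite
    · rw [tsum_eq_single (fun i => i.elim0) (fun b hb => absurd (Subsingleton.elim b _) hb)]
      simp
  | succ r ih =>
    intro u hnn hs
    obtain ⟨ihS, ihT⟩ := ih (fun k => u k.succ) (fun k m => hnn k.succ m) (fun k => hs k.succ)
    set e : ℕ × (Fin r → ℕ) ≃ (Fin (r + 1) → ℕ) := Fin.consEquiv (fun _ => ℕ) with he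
    have hcomp : ∀ p : ℕ × (Fin r → ℕ),
        (∏ k, u k ((e p) k)) = u 0 p.1 * ∏ k : Fin r, u k.succ (p.2 k) := by
      intro p
      have hep : (e p : Fin (r+1) → ℕ) = Fin.cons p.1 p.2 := rfl
      rw [hep, Fin.prod_univ_succ, Fin.cons_zero]
      refine congrArg _ (Finset.prod_congr rfl fun k _ => ?_)
      rw [Fin.cons_succ]
    have hg : Summable (fun p : ℕ × (Fin r → ℕ) => u 0 p.1 * ∏ k : Fin r, u k.succ (p.2 k)) := by
      apply Summable.mul_of_nonneg (hs 0) ihS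
      · exact fun m => hnn 0 m
      · exact fun l => Finset.prod_nonneg fun k _ => hnn k.succ (l k)
    have hsummable : Summable (fun l : Fin (r + 1) → ℕ => ∏ k, u k (l k)) := by
      have h1 : Summable (fun p : ℕ × (Fin r → ℕ) => ∏ k : Fin (r + 1), u k ((e p) k)) :=
        hg.congr fun p => (hcomp p).symm
      exact (e.summable_iff (f := fun l : Fin (r + 1) → ℕ => ∏ k, u k (l k))).mp h1
    refine ⟨hsummable, ?_⟩
    calc (∑' l : Fin (r + 1) → ℕ, ∏ k, u k (l k))
        = ∑' p : ℕ × (Fin r → ℕ), ∏ k : Fin (r + 1), u k ((e p) k) := (e.tsum_eq _).symm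
      _ = ∑' p : ℕ × (Fin r → ℕ), u 0 p.1 * ∏ k : Fin r, u k.succ (p.2 k) := tsum_congr hcomp
      _ = ∑' a : ℕ, ∑' l : Fin r → ℕ, u 0 a * ∏ k : Fin r, u k.succ (l k) := by
          refine Summable.tsum_prod' hg fun a => ?_
          exact ihS.mul_left (u 0 a)
      _ = (∑' a, u 0 a) * ∑' l : Fin r → ℕ, ∏ k : Fin r, u k.succ (l k) := by
          simp only [tsum_mul_left]
          rw [tsum_mul_right]
      _ = ∏ k : Fin (r + 1), ∑' m, u k m := by rw [Fin.prod_univ_succ, ihT]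

end QLH

open QLH

/-- Central second moment estimate:
`|R_{n,q}(s²;x) − x²| ≤ 2x²(1 − α⁽¹⁾) + x α⁽¹⁾/[n]_q`. -/
theorem stmt15 (q : ℝ) (hq : 0 < q) (hq1 : q < 1) (r : ℕ) (hr : 0 < r)
    (α : Fin r → ℝ) (hα : ∀ i, α i ∈ Set.Ioo (0 : ℝ) 1) (x : ℝ)
    (hx : x ∈ Set.Icc (0 : ℝ) 1) (n : ℕ) (hn : 1 ≤ n) :
    |LHOp q n r hr α (fun s => s ^ 2) x - x ^ 2| ≤
      2 * x ^ 2 * (1 - α ⟨0, hr⟩) + x * α ⟨0, hr⟩ / qInt q n := by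
  obtain ⟨hx0, hx1⟩ := hx
  set i0 : Fin r := ⟨0, hr⟩ with hi0
  set t : Fin r → ℝ := fun k => α k * x ^ ((k : ℕ) + 1) with ht
  have ht0 : ∀ k, 0 ≤ t k := fun k => mul_nonneg (hα k).1.le (pow_nonneg hx0 _)
  have ht1 : ∀ k, t k < 1 := by
    intro k
    have h1 : x ^ ((k : ℕ) + 1) ≤ 1 := pow_le_one₀ hx0 hx1
    have h2 : 0 ≤ x ^ ((k : ℕ) + 1) := pow_nonneg hx0 _
    have h3 := (hα k).1
    have h4 := (hα k).2
    have h5 : t k ≤ α k := by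
      calc t k = α k * x ^ ((k : ℕ) + 1) := rfl
        _ ≤ α k * 1 := by nlinarith
        _ = α k := mul_one _
    linarith
  set u : Fin r → ℕ → ℝ :=
    fun k m => cc q n m * t k ^ m * (if k = i0 then rr q n m ^ 2 else 1) with hu
  have hnn : ∀ k m, 0 ≤ u k m := by
    intro k m
    simp only [hu]
    have h1 := mul_nonneg (cc_nonneg hq.le hq1 n m) (pow_nonneg (ht0 k) m)
    by_cases h : k = i0
    · rw [if_pos h]
      exact mul_nonneg h1 (sq_nonneg _)
    · rw [if_neg h, mul_one]
      exact h1
  have hsumu : ∀ k, Summable (u k) := by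
    intro k
    by_cases h : k = i0
    · have e : u k = fun m => cc q n m * t k ^ m * rr q n m ^ 2 := by
        funext m
        simp only [hu]
        rw [if_pos h]
      rw [e]
      exact summable_cc_rr_sq hq hq1 (ht0 k) (ht1 k) hn
    · have e : u k = fun m => cc q n m * t k ^ m := by
        funext m
        simp only [hu]
        rw [if_neg h, mul_one]
      rw [e]
      exact summable_cc hq hq1 (ht0 k) (ht1 k) n
  obtain ⟨hS, hT⟩ := tsum_pi_prod r u hnn hsumu
  set f : Fin r → ℝ := fun k => ∑' m, cc q n m * t k ^ m with hf
  have hfA : ∀ k, f k * qPoch (t k) q n = 1 :=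
    fun k => tsum_cc_mul_qPoch hq hq1 (ht0 k) (ht1 k) n
  have hfnonneg : ∀ k, 0 ≤ f k := fun k =>
    tsum_nonneg fun m => mul_nonneg (cc_nonneg hq.le hq1 n m) (pow_nonneg (ht0 k) m)
  have hf0pos : 0 < f i0 := by
    rcases (hfnonneg i0).lt_or_eq with h | h
    · exact h
    · exfalso
      have := hfA i0
      rw [← h, zero_mul] at this
      norm_num at this
  have hop : LHOp q n r hr α (fun s => s ^ 2) x
      = (∏ i, qPoch (t i) q n) * ∑' l : Fin r → ℕ, ∏ k, u k (l k) := by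
    unfold LHOp
    congr 1
    apply tsum_congr
    intro l
    have h1 : x ^ (∑ k : Fin r, ((k : ℕ) + 1) * l k)
        = ∏ k : Fin r, (x ^ ((k : ℕ) + 1)) ^ l k := by
      rw [← Finset.prod_pow_eq_pow_sum]
      exact Finset.prod_congr rfl fun k _ => pow_mul x _ _
    have h2 : ∀ k : Fin r, qPoch (q ^ n) q (l k) * α k ^ l k / qPoch q q (l k)
        * (x ^ ((k : ℕ) + 1)) ^ l k = cc q n (l k) * t k ^ l k := by
      intro k
      rw [cc, ht]
      simp only
      rw [mul_pow]
      ring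
    have h3 : ∏ k, u k (l k) = (∏ k, cc q n (l k) * t k ^ l k) * rr q n (l i0) ^ 2 := by
      simp only [hu]
      rw [Finset.prod_mul_distrib, Finset.prod_ite_eq']
      simp
    rw [h3, h1]
    rw [← Finset.prod_congr rfl fun k _ => h2 k, Finset.prod_mul_distrib]
    have hrr : ((fun s => s ^ 2) (qInt q (l i0) / qInt q (n + l i0 - 1)) : ℝ)
        = rr q n (l i0) ^ 2 := rfl
    rw [hrr]
    ring
  have hPf : (∏ i, qPoch (t i) q n) * ∏ k, f k = 1 := by
    rw [← Finset.prod_mul_distrib]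
    rw [Finset.prod_congr rfl fun k _ => (mul_comm (qPoch (t k) q n) (f k)).trans (hfA k)]
    exact Finset.prod_const_one
  have hvi0 : (∑' m, u i0 m) = ∑' m, cc q n m * t i0 ^ m * rr q n m ^ 2 := by
    apply tsum_congr; intro m; simp [hu]
  have hkey : LHOp q n r hr α (fun s => s ^ 2) x * f i0
      = ∑' m, cc q n m * t i0 ^ m * rr q n m ^ 2 := by
    rw [hop, hT]
    have e1 : (∏ k, ∑' m, u k m)
        = (∑' m, u i0 m) * ∏ k ∈ Finset.univ.erase i0, ∑' m, u k m :=
      (Finset.mul_prod_erase Finset.univ _ (Finset.mem_univ i0)).symm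
    have e2 : ∏ k ∈ Finset.univ.erase i0, (∑' m, u k m) = ∏ k ∈ Finset.univ.erase i0, f k := by
      refine Finset.prod_congr rfl fun k hk => ?_
      have hk' : k ≠ i0 := (Finset.mem_erase.mp hk).1
      apply tsum_congr
      intro m
      simp only [hu, hf]
      rw [if_neg hk', mul_one]
    have e3 : (∏ k, f k) = f i0 * ∏ k ∈ Finset.univ.erase i0, f k :=
      (Finset.mul_prod_erase Finset.univ _ (Finset.mem_univ i0)).symm
    rw [e1, e2, ← hvi0]
    calc (∏ i, qPoch (t i) q n) * ((∑' m, u i0 m) * ∏ k ∈ Finset.univ.erase i0, f k) * f i0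
        = (∑' m, u i0 m) * ((∏ i, qPoch (t i) q n) * (f i0 * ∏ k ∈ Finset.univ.erase i0, f k)) := by
          ring
      _ = (∑' m, u i0 m) := by rw [← e3, hPf, mul_one]
  have hub : LHOp q n r hr α (fun s => s ^ 2) x ≤ q * t i0 ^ 2 + t i0 / qInt q n := by
    have h1 : LHOp q n r hr α (fun s => s ^ 2) x * f i0
        ≤ (q * t i0 ^ 2 + t i0 / qInt q n) * f i0 := by
      rw [hkey]
      exact tsum_cc_rr_sq_le hq hq1 (ht0 i0) (ht1 i0) hn
    exact le_of_mul_le_mul_right h1 hf0pos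
  have hlb : 2 * x * t i0 - x ^ 2 ≤ LHOp q n r hr α (fun s => s ^ 2) x := by
    have hB : ∑' m, cc q n m * t i0 ^ m * rr q n m = t i0 * f i0 :=
      tsum_cc_rr hq hq1 (ht0 i0) (ht1 i0) hn
    have hE := tsum_cc_rr_sq_ge hq hq1 (ht0 i0) (ht1 i0) hn hx0
    rw [hB] at hE
    have h2 : (2 * x * t i0 - x ^ 2) * f i0
        ≤ LHOp q n r hr α (fun s => s ^ 2) x * f i0 := by
      rw [hkey]
      nlinarith [hE]
    exact le_of_mul_le_mul_right h2 hf0pos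
  have hti0 : t i0 = α i0 * x := by
    rw [ht]
    norm_num
  have hIn : 0 < qInt q n := qInt_pos hq.le hq1 hn
  have hα0 := hα i0
  obtain ⟨hα1, hα2⟩ := hα0
  rw [abs_le]
  constructor
  · rw [hti0] at hlb
    have hdiv : 0 ≤ x * α i0 / qInt q n := by positivity
    nlinarith [hlb, hdiv]
  · rw [hti0] at hub
    have hA2 : α i0 ^ 2 ≤ 1 := by nlinarith
    have e2 : (α i0 * x) ^ 2 ≤ x ^ 2 := by
      nlinarith [mul_nonneg (sq_nonneg x) (sub_nonneg.mpr hA2)]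
    have hq2 : q * (α i0 * x) ^ 2 ≤ x ^ 2 := by
      calc q * (α i0 * x) ^ 2 ≤ 1 * (α i0 * x) ^ 2 := by nlinarith [sq_nonneg (α i0 * x)]
        _ = (α i0 * x) ^ 2 := one_mul _
        _ ≤ x ^ 2 := e2
    have hdiv2 : (α i0 * x) / qInt q n = x * α i0 / qInt q n := by ring
    rw [hdiv2] at hub
    have h9 : 0 ≤ 2 * x ^ 2 * (1 - α i0) := by nlinarith [sq_nonneg x]
    linarith [hub, hq2, h9]
end
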